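/- Let L be a cubic algebra, I a special subalgebra of L, and g ∈ I. Then Δ([g, 1], I) = I_g, where [g, 1] := {x ∈ L : g ≤ x}, I_g := {Δ(g ∨ f, f) : f ∈ I}, and for special subalgebras J ⊆ I, Δ(J, I) := J ∨ Δ(1, J → I), with A ∨ B := {a ∧ b : a ∈ A, b ∈ B, a ∧ b exists in L} and Δ(1, B) := {Δ(1, b) : b ∈ B}. -/
import Mathlib


universe u

/-- A cubic algebra: a join-semilattice with greatest element `⊤` and a binary
operation `Δ` satisfying the axioms of Bailey–Oliveira. `dot x y` is the derived
implication operation `x·y = Δ(⊤, Δ(x ⊔ y, y)) ⊔ y`. -/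
class CubicAlgebra (L : Type u) extends SemilatticeSup L, OrderTop L where
  Δ : L → L → L
  dot : L → L → L
  dot_def : ∀ x y : L, dot x y = Δ ⊤ (Δ (x ⊔ y) y) ⊔ y
  Δ_join : ∀ x y : L, x ≤ y → Δ y x ⊔ x = y
  Δ_comp : ∀ x y z : L, x ≤ y → y ≤ z → Δ z (Δ y x) = Δ (Δ z y) (Δ z x)
  Δ_invol : ∀ x y : L, x ≤ y → Δ y (Δ y x) = x
  Δ_mono : ∀ x y z : L, x ≤ y → y ≤ z → Δ z x ≤ Δ z y
  dot_dot : ∀ x y : L, dot (dot x y) y = x ⊔ y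
  dot_exch : ∀ x y z : L, dot x (dot y z) = dot y (dot x z)

namespace CubicAlgebra

variable {L : Type u} [CubicAlgebra L]

/-- `a ∼ b` iff `Δ(a ⊔ b, a) = b`. -/
def sim (a b : L) : Prop := Δ (a ⊔ b) a = b

/-- `m` is the greatest lower bound of `a` and `b`. -/
def IsMeet (a b m : L) : Prop := m ≤ a ∧ m ≤ b ∧ ∀ c : L, c ≤ a → c ≤ b → c ≤ m

/-- A special subalgebra of a cubic algebra. -/
structure IsSpecial (S : Set L) : Prop where
  top_mem : (⊤ : L) ∈ S
  upward : ∀ x ∈ S, ∀ y : L, x ≤ y → y ∈ S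
  dot_mem : ∀ x ∈ S, ∀ y ∈ S, dot x y ∈ S
  compat : ∀ x ∈ S, ∀ y ∈ S, x ⊔ Δ ⊤ y = ⊤
  meet_mem : ∀ x ∈ S, ∀ y ∈ S, ∀ m : L, IsMeet x y m → m ∈ S

/-- `A ∨ B` for sets: all existing meets `a ∧ b`, `a ∈ A`, `b ∈ B`. -/
def svee (A B : Set L) : Set L := {z | ∃ a ∈ A, ∃ b ∈ B, IsMeet a b z}

/-- `J → I` for sets. -/
def sarrow (J I : Set L) : Set L := {h | h ∈ I ∧ ∀ g ∈ J, h ⊔ g = ⊤}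

/-- `Δ(J, I) := J ∨ Δ(⊤, J → I)`. -/
def sDelta (J I : Set L) : Set L := svee J ((fun b => Δ ⊤ b) '' sarrow J I)

/-- `I_g := {Δ(g ⊔ f, f) : f ∈ I}`. -/
def shift (I : Set L) (g : L) : Set L := {z | ∃ f ∈ I, z = Δ (g ⊔ f) f}

end CubicAlgebra

namespace CubicAlgebra

variable {L : Type u} [CubicAlgebra L]

lemma delta_le {x y : L} (h : x ≤ y) : Δ y x ≤ y :=
  le_of_le_of_eq le_sup_left (Δ_join x y h)

lemma delta_idem (y : L) : Δ y y = y := by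
  have h1 : Δ y (Δ y y) = y := Δ_invol y y le_rfl
  have h2 : Δ y (Δ y y) = Δ (Δ y y) (Δ y y) := Δ_comp y y y le_rfl le_rfl
  rw [h1] at h2
  exact le_antisymm (delta_le le_rfl) (h2.le.trans (delta_le le_rfl))

lemma dtop_invol (x : L) : Δ ⊤ (Δ ⊤ x) = x := Δ_invol x ⊤ le_top

lemma dtop_mono {x y : L} (h : x ≤ y) : Δ ⊤ x ≤ Δ ⊤ y := Δ_mono x y ⊤ h le_top

lemma dtop_sup (x y : L) : Δ ⊤ (x ⊔ y) = Δ ⊤ x ⊔ Δ ⊤ y := by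
  apply le_antisymm
  · have hx : x ≤ Δ ⊤ (Δ ⊤ x ⊔ Δ ⊤ y) := by
      have := dtop_mono (le_sup_left : Δ ⊤ x ≤ Δ ⊤ x ⊔ Δ ⊤ y)
      rwa [dtop_invol] at this
    have hy : y ≤ Δ ⊤ (Δ ⊤ x ⊔ Δ ⊤ y) := by
      have := dtop_mono (le_sup_right : Δ ⊤ y ≤ Δ ⊤ x ⊔ Δ ⊤ y)
      rwa [dtop_invol] at this
    have := dtop_mono (sup_le hx hy)
    rwa [dtop_invol] at this
  · exact sup_le (dtop_mono le_sup_left) (dtop_mono le_sup_right)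

lemma dtop_top : Δ (⊤ : L) ⊤ = ⊤ := delta_idem ⊤

lemma dot_top_left (y : L) : dot ⊤ y = y := by
  rw [dot_def, top_sup_eq, dtop_invol, sup_idem]

lemma dot_self_top (x : L) : dot x x = ⊤ := by
  have h := dot_dot (⊤ : L) x
  rwa [dot_top_left, top_sup_eq] at h

lemma sup_dtop (x : L) : x ⊔ Δ ⊤ x = ⊤ := by
  have h := dot_self_top x
  rw [dot_def, sup_idem, delta_idem] at h
  rwa [sup_comm] at h

lemma dot_le_right' (x y : L) : y ≤ dot x y := by
  rw [dot_def]; exact le_sup_right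

lemma sup_dot' (x y : L) : x ⊔ dot x y = ⊤ := by
  rw [dot_def]
  apply top_unique
  have h1 : Δ (x ⊔ y) y ≤ x ⊔ y := delta_le le_sup_right
  calc (⊤ : L) = Δ (x ⊔ y) y ⊔ Δ ⊤ (Δ (x ⊔ y) y) := (sup_dtop _).symm
    _ ≤ (x ⊔ (Δ ⊤ (Δ (x ⊔ y) y) ⊔ y)) := by
        apply sup_le
        · exact h1.trans (sup_le le_sup_left (le_sup_of_le_right le_sup_right))
        · exact le_sup_of_le_right le_sup_left

lemma dot_eq_top_of_le {x y : L} (h : x ≤ y) : dot x y = ⊤ := by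
  rw [dot_def, sup_eq_right.2 h, delta_idem, sup_comm]
  exact sup_dtop y

lemma le_of_dot_eq_top {x y : L} (h : dot x y = ⊤) : x ≤ y := by
  have h2 := dot_dot x y
  rw [h, dot_top_left] at h2
  exact sup_eq_right.mp h2.symm

lemma dot_sup_left' (x y : L) : dot (x ⊔ y) y = dot x y := by
  rw [dot_def, dot_def, sup_assoc, sup_idem]

lemma dot_anti' {x y : L} (b : L) (h : x ≤ y) : dot y b ≤ dot x b := by
  apply le_of_dot_eq_top
  rw [dot_exch, dot_dot]
  exact dot_eq_top_of_le (h.trans le_sup_left)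

lemma dot_mono' {c w : L} (a : L) (h : c ≤ w) : dot a c ≤ dot a w := by
  have h1 : dot (dot w c) c = w := by rw [dot_dot, sup_eq_left.2 h]
  calc dot a c ≤ dot (dot w c) (dot a c) := dot_le_right' _ _
    _ = dot a (dot (dot w c) c) := (dot_exch _ _ _).symm
    _ = dot a w := by rw [h1]

/-- Boolean filter lemma: if `t ≤ u`, `t ≤ y` and `u ⊔ (y → t) = ⊤` then `y ≤ u`. -/
lemma lem_BF {t u y : L} (htu : t ≤ u) (hty : t ≤ y) (hcond : u ⊔ dot y t = ⊤) :
    y ≤ u := by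
  apply le_of_dot_eq_top
  have s1 : dot (dot u (dot y t)) (dot y t) = ⊤ := by rw [dot_dot, hcond]
  have s3 : dot u (dot y t) = dot y t :=
    le_antisymm (le_of_dot_eq_top s1) (dot_le_right' _ _)
  have s4 : dot y (dot u t) = dot y t := by rw [← dot_exch]; exact s3
  have s5 : dot (dot u t) t = u := by rw [dot_dot, sup_eq_left.2 htu]
  calc dot y u = dot y (dot (dot u t) t) := by rw [s5]
    _ = dot (dot u t) (dot y t) := dot_exch _ _ _
    _ = dot (dot u t) (dot y (dot u t)) := by rw [s4]
    _ = ⊤ := dot_eq_top_of_le (dot_le_right' _ _)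

/-- Boolean lower lemma: if `b ≤ u ≤ v` and `u ≤ (v → b)` then `u ≤ b`. -/
lemma lem_BL {b u v : L} (hbu : b ≤ u) (huv : u ≤ v) (hud : u ≤ dot v b) : u ≤ b := by
  have h1 : u ≤ dot u b := hud.trans (dot_anti' b huv)
  have h2 : dot u b = ⊤ :=
    top_unique ((sup_dot' u b).symm.le.trans (sup_le h1 le_rfl))
  exact le_of_dot_eq_top h2

/-- Reflection lemma: if `c ≤ a`, `c ≤ w` and `a ⊔ w = ⊤`, then `Δ a c ≤ Δ ⊤ w`. -/
lemma lem_P {c a w : L} (hca : c ≤ a) (hcw : c ≤ w) (haw : a ⊔ w = ⊤) :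
    Δ a c ≤ Δ ⊤ w := by
  have h3 : dot a c ≤ w := by
    have h1 := dot_mono' a hcw
    rwa [← dot_sup_left' a w, haw, dot_top_left] at h1
  have h5 : Δ a c ≤ Δ ⊤ (dot a c) := by
    rw [dot_def, sup_eq_left.2 hca, dtop_sup, dtop_invol]
    exact le_sup_left
  exact h5.trans (dtop_mono h3)

end CubicAlgebra

open CubicAlgebra in
/-- For `g ∈ I`: `Δ([g, ⊤], I) = I_g`. -/
theorem sDelta_principal {L : Type u} [CubicAlgebra L] (I : Set L)
    (hI : IsSpecial I) (g : L) (hg : g ∈ I) :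
    sDelta {x : L | g ≤ x} I = shift I g := by
  ext z
  constructor
  · rintro ⟨a, hga, b, ⟨h, ⟨hhI, hharr⟩, rfl⟩, hm⟩
    obtain ⟨hm1, hm2, hm3⟩ := hm
    replace hga : g ≤ a := hga
    have hhg : h ⊔ g = ⊤ := hharr g le_rfl
    have hhg2 : g ⊔ h = ⊤ := by rwa [sup_comm] at hhg
    have haI : a ∈ I := hI.upward g hg a hga
    have hah' : a ⊔ Δ ⊤ h = ⊤ := hI.compat a haI h hhI
    have hgh' : g ⊔ Δ ⊤ h = ⊤ := hI.compat g hg h hhI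
    have hah : a ⊔ h = ⊤ := top_unique (by
      rw [← hhg]
      exact sup_le le_sup_right (hga.trans le_sup_left))
    have hfa : Δ a z ≤ a := delta_le hm1
    have hfh : Δ a z ≤ h := by
      have := lem_P hm1 hm2 hah'
      rwa [dtop_invol] at this
    have hmeet : IsMeet a h (Δ a z) := by
      refine ⟨hfa, hfh, fun c hca hch => ?_⟩
      have h1 : Δ a c ≤ Δ ⊤ h := lem_P hca hch hah
      have h3 : Δ a c ≤ z := hm3 _ (delta_le hca) h1
      have h4 : Δ a (Δ a c) ≤ Δ a z := Δ_mono _ _ _ h3 hm1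
      rwa [Δ_invol c a hca] at h4
    have hfI : Δ a z ∈ I := hI.meet_mem a haI h hhI _ hmeet
    have hΔaf : Δ a (Δ a z) = z := Δ_invol z a hm1
    have hm'h : Δ ⊤ z ≤ h := by
      have := dtop_mono hm2
      rwa [dtop_invol] at this
    have hh'a' : Δ ⊤ h ⊔ Δ ⊤ a = ⊤ := by
      rw [← dtop_sup, sup_comm h a, hah, dtop_top]
    have hstep3 : Δ (Δ ⊤ h) (Δ ⊤ (Δ a z)) ≤ z := by
      have hP := lem_P (dtop_mono hfh) (dtop_mono hfa) hh'a'
      rw [dtop_invol] at hP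
      exact hm3 _ hP (delta_le (dtop_mono hfh))
    have hΔhf : Δ h (Δ a z) ≤ Δ ⊤ z := by
      have e := Δ_comp (Δ a z) h ⊤ hfh le_top
      have h0 : Δ ⊤ (Δ h (Δ a z)) ≤ z := by rw [e]; exact hstep3
      have h2 := dtop_mono h0
      rwa [dtop_invol] at h2
    have hf_le : Δ a z ≤ Δ h (Δ ⊤ z) := by
      have h4 : Δ h (Δ h (Δ a z)) ≤ Δ h (Δ ⊤ z) := Δ_mono _ _ _ hΔhf hm'h
      rwa [Δ_invol (Δ a z) h hfh] at h4
    have hg'h : Δ ⊤ g ⊔ h = ⊤ := by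
      have := congrArg (Δ (⊤ : L)) hgh'
      rwa [dtop_sup, dtop_invol, dtop_top] at this
    have hha' : h ⊔ Δ ⊤ a = ⊤ := top_unique
      (hg'h.ge.trans (sup_le ((dtop_mono hga).trans le_sup_right) le_sup_left))
    have hf3a : Δ h (Δ ⊤ z) ≤ a := by
      have hP := lem_P hm'h (dtop_mono hm1) hha'
      rwa [dtop_invol] at hP
    have hf3f : Δ h (Δ ⊤ z) ≤ Δ a z := hmeet.2.2 _ hf3a (delta_le hm'h)
    have hff3 : Δ a z = Δ h (Δ ⊤ z) := le_antisymm hf_le hf3f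
    have hfm' : Δ a z ⊔ Δ ⊤ z = h := by rw [hff3]; exact Δ_join _ _ hm'h
    have hdot : dot a (Δ a z) = Δ ⊤ z ⊔ Δ a z := by
      rw [dot_def, sup_eq_left.2 hfa, hΔaf]
    have hcond : (g ⊔ Δ a z) ⊔ dot a (Δ a z) = ⊤ := top_unique (by
      rw [hdot]
      refine hhg2.ge.trans (sup_le (le_sup_of_le_left le_sup_left) ?_)
      refine (le_of_eq hfm'.symm).trans ?_
      exact sup_le (le_sup_of_le_left le_sup_right) (le_sup_of_le_right le_sup_left))
    have hBF : a ≤ g ⊔ Δ a z := lem_BF le_sup_right hfa hcond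
    have hgfa : g ⊔ Δ a z = a := le_antisymm (sup_le hga hfa) hBF
    exact ⟨Δ a z, hfI, by rw [hgfa]; exact hΔaf.symm⟩
  · rintro ⟨f, hfI, rfl⟩
    have hfy : f ≤ g ⊔ f := le_sup_right
    have hty : Δ (g ⊔ f) f ≤ g ⊔ f := delta_le hfy
    have hΔyt : Δ (g ⊔ f) (Δ (g ⊔ f) f) = f := Δ_invol f (g ⊔ f) hfy
    have hdotgf : dot g f = Δ ⊤ (Δ (g ⊔ f) f) ⊔ f := dot_def g f
    have hhg : dot g f ⊔ g = ⊤ := top_unique (by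
      rw [hdotgf]
      refine (sup_dtop (Δ (g ⊔ f) f)).ge.trans
        (sup_le ?_ (le_sup_of_le_left le_sup_left))
      exact hty.trans (sup_le le_sup_right (le_sup_of_le_left le_sup_right)))
    have hb : Δ ⊤ (dot g f) = Δ (g ⊔ f) f ⊔ Δ ⊤ f := by
      rw [hdotgf, dtop_sup, dtop_invol]
    refine ⟨g ⊔ f, le_sup_left, Δ ⊤ (dot g f),
      ⟨dot g f, ⟨hI.dot_mem g hg f hfI, fun x hx => ?_⟩, rfl⟩, ?_⟩
    · exact top_unique (by
        rw [← hhg]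
        exact sup_le le_sup_left (hx.trans le_sup_right))
    · rw [hb]
      refine ⟨hty, le_sup_left, fun c hcy hcb => ?_⟩
      have hdyt : dot (g ⊔ f) (Δ (g ⊔ f) f) = Δ ⊤ f ⊔ Δ (g ⊔ f) f := by
        rw [dot_def, sup_eq_left.2 hty, hΔyt]
      have h1 : Δ (g ⊔ f) f ⊔ c ≤ dot (g ⊔ f) (Δ (g ⊔ f) f) := by
        rw [hdyt]
        exact sup_le le_sup_right (hcb.trans (sup_comm _ _).le)
      have h2 : Δ (g ⊔ f) f ⊔ c ≤ Δ (g ⊔ f) f :=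
        lem_BL le_sup_left (sup_le hty hcy) h1
      exact le_sup_right.trans h2
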